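/- Consider the Hoeffding test that accepts H₀ on measurement sequences of length t iff Δ₀ of the joint empirical type is less than α > 0. Then the worst-case type-I error probability satisfies μ_t ≤ (t+1)^{|X|^K} · 2^{−tα}, and the worst-case type-II error probability satisfies λ_t ≤ (t+1)^{|X|^K} · 2^{−t β^*(α)}, where μ_t = max_{p₀: d(p₀)≤d₀} p₀(R_t^c) and λ_t = max_{p₁: d(p₁)≥d₁} p₁(R_t) with R_t the acceptance region. -/

import Mathlib

open Finset

/-- The probability simplex over a finite alphabet `Z`. -/
def simplex (Z : Type*) [Fintype Z] : Set (Z → ℝ) :=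
  {p | (∀ z, 0 ≤ p z) ∧ ∑ z, p z = 1}

/-- KL divergence (in bits) between two distributions on a finite alphabet,
with value `∞` when absolute continuity fails. -/
noncomputable def KLdiv {Z : Type*} [Fintype Z] (p q : Z → ℝ) : ENNReal :=
  if ∀ z, q z = 0 → p z = 0 then
    ENNReal.ofReal (∑ z, p z * Real.logb 2 (p z / q z))
  else ⊤

/-- `Δ₀(p) = inf {D(p‖p₀) : d(p₀) ≤ d₀}` (infimum over the empty set is `∞`). -/
noncomputable def Delta0 {Z : Type*} [Fintype Z]
    (d : (Z → ℝ) → ℝ) (d0 : ℝ) (p : Z → ℝ) : ENNReal :=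
  sInf {v | ∃ q ∈ simplex Z, d q ≤ d0 ∧ v = KLdiv p q}

/-- `Δ₁(p) = inf {D(p‖p₁) : d(p₁) ≥ d₁}` (infimum over the empty set is `∞`). -/
noncomputable def Delta1 {Z : Type*} [Fintype Z]
    (d : (Z → ℝ) → ℝ) (d1 : ℝ) (p : Z → ℝ) : ENNReal :=
  sInf {v | ∃ q ∈ simplex Z, d1 ≤ d q ∧ v = KLdiv p q}

/-- `α_*(γ) = inf {Δ₀(p) : p ∈ simplex, d(p) ≥ γ}`. -/
noncomputable def alphaStar {Z : Type*} [Fintype Z]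
    (d : (Z → ℝ) → ℝ) (d0 γ : ℝ) : ENNReal :=
  sInf {v | ∃ p ∈ simplex Z, γ ≤ d p ∧ v = Delta0 d d0 p}

/-- `γ_*(α) = inf {γ ≥ 0 : α_*(γ) ≥ α}`. -/
noncomputable def gammaStar {Z : Type*} [Fintype Z]
    (d : (Z → ℝ) → ℝ) (d0 : ℝ) (α : ENNReal) : ℝ :=
  sInf {γ | 0 ≤ γ ∧ α ≤ alphaStar (Z := Z) d d0 γ}

/-- `β_*(α) = inf {Δ₁(p) : d(p) < γ_*(α)}`. -/
noncomputable def betaStarLow {Z : Type*} [Fintype Z]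
    (d : (Z → ℝ) → ℝ) (d0 d1 : ℝ) (α : ENNReal) : ENNReal :=
  sInf {v | ∃ p ∈ simplex Z, d p < gammaStar d d0 α ∧ v = Delta1 d d1 p}

/-- `β^*(α) = inf {Δ₁(p) : Δ₀(p) < α}`. -/
noncomputable def betaStarHigh {Z : Type*} [Fintype Z]
    (d : (Z → ℝ) → ℝ) (d0 d1 : ℝ) (α : ENNReal) : ENNReal :=
  sInf {v | ∃ p ∈ simplex Z, Delta0 d d0 p < α ∧ v = Delta1 d d1 p}

/-- The `k`-th marginal of a joint distribution on `Fin K → X`. -/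
noncomputable def marg {X : Type*} [Fintype X] [DecidableEq X] {K : ℕ}
    (p : (Fin K → X) → ℝ) (k : Fin K) : X → ℝ :=
  fun x => ∑ f ∈ Finset.univ.filter (fun f : Fin K → X => f k = x), p f

open scoped Classical

/-- The empirical type (empirical distribution) of a length-`t` sequence. -/
noncomputable def empDist {Z : Type*} [Fintype Z] [DecidableEq Z] {t : ℕ}
    (s : Fin t → Z) : Z → ℝ :=
  fun z => ((Finset.univ.filter fun i => s i = z).card : ℝ) / t

/-- Probability of a set of length-`t` i.i.d. sequences under per-symbol distribution `p`. -/
noncomputable def seqProb {Z : Type*} [Fintype Z] {t : ℕ}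
    (p : Z → ℝ) (A : Finset (Fin t → Z)) : ENNReal :=
  ∑ s ∈ A, ∏ i, ENNReal.ofReal (p (s i))

open Real

/-!
For a sequence `s` of empirical type `q`, the i.i.d. probability factorises as
`pᵗ(s) = qᵗ(s) · 2^{-t D(q‖p)}`. A type class has `qᵗ`-probability at most one and there are at
most `(t+1)^{|Z|}` types, so a set of sequences whose types all satisfy `D(q‖p) ≥ c` has
`pᵗ`-probability at most `(t+1)^{|Z|} 2^{-tc}`. A sequence rejected by the test has
`Δ₀(q) ≥ α`, hence `D(q‖p₀) ≥ α` for every admissible `p₀`; an accepted one has `Δ₀(q) < α`,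
hence `D(q‖p₁) ≥ Δ₁(q) ≥ β^*(α)` for every admissible `p₁`.
-/

section SeqProb

variable {Z : Type*} [Fintype Z] {t : ℕ}

lemma seqProb_univ {p : Z → ℝ} (hp : p ∈ simplex Z) :
    seqProb p (univ : Finset (Fin t → Z)) = 1 := by
  rw [seqProb, ← Fintype.sum_pow (fun z => ENNReal.ofReal (p z)) t,
    ← ENNReal.ofReal_sum_of_nonneg fun z _ => hp.1 z, hp.2]
  simp

lemma seqProb_le_one {p : Z → ℝ} (hp : p ∈ simplex Z) (A : Finset (Fin t → Z)) :
    seqProb p A ≤ 1 :=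
  seqProb_univ hp ▸ sum_le_sum_of_subset (subset_univ A)

end SeqProb

section MethodOfTypes

variable {Z : Type*} [Fintype Z] [DecidableEq Z] {t : ℕ}

lemma prod_comp_eq_prod_pow_card {M : Type*} [CommMonoid M] (s : Fin t → Z) (f : Z → M) :
    ∏ i, f (s i) = ∏ z, f z ^ #{i | s i = z} := by
  rw [prod_comp]
  refine prod_subset (subset_univ _) fun z _ hz => ?_
  rw [card_eq_zero.2 (filter_eq_empty_iff.2 fun i _ (hi : s i = z) =>
    hz (hi ▸ mem_image_of_mem s (mem_univ i))), pow_zero]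

lemma empDist_nonneg (s : Fin t → Z) (z : Z) : 0 ≤ empDist s z := by
  unfold empDist; positivity

lemma natCast_card_filter_eq_mul_empDist (s : Fin t → Z) (z : Z) :
    (#{i | s i = z} : ℝ) = t * empDist s z := by
  rcases Nat.eq_zero_or_pos t with rfl | ht
  · simp
  · exact (mul_div_cancel₀ _ (by positivity)).symm

lemma empDist_mem_simplex (ht : 0 < t) (s : Fin t → Z) : empDist s ∈ simplex Z := by
  refine ⟨empDist_nonneg s, mul_left_cancel₀ (Nat.cast_ne_zero.2 ht.ne') ?_⟩
  rw [mul_sum, ← sum_congr rfl fun z _ => natCast_card_filter_eq_mul_empDist s z, mul_one]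
  exact_mod_cast (card_eq_sum_card_fiberwise fun i (_ : i ∈ univ) => mem_univ (s i)).symm.trans
    (card_fin t)

lemma card_image_empDist_le :
    #(univ.image (empDist : (Fin t → Z) → Z → ℝ)) ≤ (t + 1) ^ Fintype.card Z := by
  let count : (Fin t → Z) → Z → Fin (t + 1) := fun s z =>
    ⟨#{i | s i = z}, Nat.lt_succ_of_le ((card_filter_le _ _).trans_eq (card_fin t))⟩
  have hfactor : univ.image (empDist : (Fin t → Z) → Z → ℝ) =
      (univ.image count).image fun n z => ((n z : ℕ) : ℝ) / t := by
    rw [image_image]; rfl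
  calc #(univ.image (empDist : (Fin t → Z) → Z → ℝ))
      ≤ #(univ.image count) := hfactor ▸ card_image_le
    _ ≤ Fintype.card (Z → Fin (t + 1)) := card_le_univ _
    _ = (t + 1) ^ Fintype.card Z := by simp

lemma sum_prod_empDist_le (ht : 0 < t) (A : Finset (Fin t → Z)) :
    ∑ s ∈ A, ∏ i, ENNReal.ofReal (empDist s (s i)) ≤ (t + 1) ^ Fintype.card Z := by
  calc ∑ s ∈ A, ∏ i, ENNReal.ofReal (empDist s (s i))
      = ∑ q ∈ A.image empDist, seqProb q {s ∈ A | empDist s = q} := by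
        rw [← sum_fiberwise_of_maps_to fun s hs => mem_image_of_mem empDist hs]
        refine sum_congr rfl fun q _ => sum_congr rfl fun s hs => ?_
        rw [(mem_filter.1 hs).2]
    _ ≤ ∑ q ∈ A.image empDist, 1 := sum_le_sum fun q hq => by
        obtain ⟨s, -, rfl⟩ := mem_image.1 hq
        exact seqProb_le_one (empDist_mem_simplex ht s) _
    _ = #(A.image empDist) := by simp
    _ ≤ (t + 1) ^ Fintype.card Z := by
        exact_mod_cast (card_le_card (image_subset_image (subset_univ A))).trans
          card_image_empDist_le

lemma pow_eq_pow_mul_rpow_logb {a b : ℝ} (ha : 0 < a) (hb : 0 < b) (n : ℕ) :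
    b ^ n = a ^ n * 2 ^ (-(n : ℝ) * logb 2 (a / b)) := by
  rw [mul_comm (-(n : ℝ)), rpow_mul zero_le_two, rpow_logb two_pos (by norm_num) (div_pos ha hb),
    rpow_neg (div_pos ha hb).le, rpow_natCast, div_pow]
  field_simp

lemma prod_eq_prod_empDist_mul_rpow (s : Fin t → Z) {p : Z → ℝ} (hp : ∀ z, 0 ≤ p z)
    (hac : ∀ z, p z = 0 → empDist s z = 0) :
    ∏ i, p (s i) = (∏ i, empDist s (s i)) *
      2 ^ (-(t : ℝ) * ∑ z, empDist s z * logb 2 (empDist s z / p z)) := by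
  rw [prod_comp_eq_prod_pow_card s p, prod_comp_eq_prod_pow_card s (empDist s), mul_sum,
    rpow_sum_of_pos two_pos, ← prod_mul_distrib]
  refine prod_congr rfl fun z _ => ?_
  rw [← mul_assoc, neg_mul, ← natCast_card_filter_eq_mul_empDist]
  rcases eq_or_ne #{i | s i = z} 0 with hn | hn
  · simp [hn]
  have hq : 0 < empDist s z := (empDist_nonneg s z).lt_of_ne' fun h => hn <|
    Nat.cast_eq_zero.1 ((natCast_card_filter_eq_mul_empDist s z).trans (by rw [h, mul_zero]))
  have hpz : 0 < p z := (hp z).lt_of_ne' fun h => hq.ne' (hac z h)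
  exact pow_eq_pow_mul_rpow_logb hq hpz _

lemma prod_ofReal_le_of_le_KLdiv (s : Fin t → Z) {p : Z → ℝ} (hp : ∀ z, 0 ≤ p z) {c : ℝ}
    (hc : 0 < c) (hs : ENNReal.ofReal c ≤ KLdiv (empDist s) p) :
    ∏ i, ENNReal.ofReal (p (s i)) ≤
      (∏ i, ENNReal.ofReal (empDist s (s i))) * ENNReal.ofReal (2 ^ (-(t : ℝ) * c)) := by
  unfold KLdiv at hs
  split_ifs at hs with hac
  · have hcD : c ≤ ∑ z, empDist s z * logb 2 (empDist s z / p z) := by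
      simpa [hc.not_ge] using ENNReal.ofReal_le_ofReal_iff'.1 hs
    rw [← ENNReal.ofReal_prod_of_nonneg fun i _ => hp (s i),
      ← ENNReal.ofReal_prod_of_nonneg fun i _ => empDist_nonneg s (s i),
      ← ENNReal.ofReal_mul (prod_nonneg fun i _ => empDist_nonneg s (s i)),
      prod_eq_prod_empDist_mul_rpow s hp hac]
    refine ENNReal.ofReal_le_ofReal (mul_le_mul_of_nonneg_left ?_
      (prod_nonneg fun i _ => empDist_nonneg s (s i)))
    exact rpow_le_rpow_of_exponent_le one_le_two
      (mul_le_mul_of_nonpos_left hcD (neg_nonpos.2 t.cast_nonneg))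
  · push Not at hac
    obtain ⟨z, hpz, hqz⟩ := hac
    obtain ⟨i, rfl⟩ : ∃ i, s i = z := by
      by_contra! h
      exact hqz (by simp [empDist, h])
    rw [prod_eq_zero (mem_univ i) (by rw [hpz, ENNReal.ofReal_zero])]
    exact bot_le

theorem seqProb_le_of_le_KLdiv (ht : 0 < t) {p : Z → ℝ} (hp : p ∈ simplex Z)
    (A : Finset (Fin t → Z)) (c : ℝ) (hA : ∀ s ∈ A, ENNReal.ofReal c ≤ KLdiv (empDist s) p) :
    seqProb p A ≤ (t + 1) ^ Fintype.card Z * ENNReal.ofReal (2 ^ (-(t : ℝ) * c)) := by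
  rcases le_or_gt c 0 with hc | hc
  · have hexp : 0 ≤ -(t : ℝ) * c := mul_nonneg_of_nonpos_of_nonpos (neg_nonpos.2 t.cast_nonneg) hc
    calc seqProb p A ≤ 1 := seqProb_le_one hp A
      _ ≤ _ := one_le_mul (one_le_pow₀ le_add_self)
          (ENNReal.one_le_ofReal.2 (one_le_rpow one_le_two hexp))
  · calc seqProb p A
        ≤ ∑ s ∈ A, (∏ i, ENNReal.ofReal (empDist s (s i))) * ENNReal.ofReal (2 ^ (-(t : ℝ) * c)) :=
          sum_le_sum fun s hs => prod_ofReal_le_of_le_KLdiv s hp.1 hc (hA s hs)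
      _ ≤ _ := by
          rw [← sum_mul]
          gcongr
          exact sum_prod_empDist_le ht A

end MethodOfTypes

section Divergences

variable {Z : Type*} [Fintype Z] {d : (Z → ℝ) → ℝ}

lemma Delta0_le_KLdiv {d0 : ℝ} {p q : Z → ℝ} (hq : q ∈ simplex Z) (hd : d q ≤ d0) :
    Delta0 d d0 p ≤ KLdiv p q :=
  sInf_le ⟨q, hq, hd, rfl⟩

lemma Delta1_le_KLdiv {d1 : ℝ} {p q : Z → ℝ} (hq : q ∈ simplex Z) (hd : d1 ≤ d q) :
    Delta1 d d1 p ≤ KLdiv p q :=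
  sInf_le ⟨q, hq, hd, rfl⟩

lemma betaStarHigh_le_Delta1 {d0 d1 : ℝ} {α : ENNReal} {p : Z → ℝ} (hp : p ∈ simplex Z)
    (hα : Delta0 d d0 p < α) : betaStarHigh d d0 d1 α ≤ Delta1 d d1 p :=
  sInf_le ⟨p, hp, hα, rfl⟩

end Divergences

theorem stmt18_general {X : Type*} [Fintype X] [DecidableEq X] (K t : ℕ) (ht : 0 < t)
    (d : ((Fin K → X) → ℝ) → ℝ) (d0 d1 : ℝ) (α : ℝ) :
    (⨆ p0 ∈ {p ∈ simplex (Fin K → X) | d p ≤ d0},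
        seqProb p0 (Finset.univ.filter fun s : Fin t → Fin K → X =>
          ¬ Delta0 d d0 (empDist s) < ENNReal.ofReal α))
      ≤ ((t : ENNReal) + 1) ^ (Fintype.card X ^ K) *
          ENNReal.ofReal ((2:ℝ) ^ (-(t : ℝ) * α)) ∧
    ∀ b : ℝ, 0 ≤ b →
      ENNReal.ofReal b ≤ betaStarHigh (Z := Fin K → X) d d0 d1 (ENNReal.ofReal α) →
      (⨆ p1 ∈ {p ∈ simplex (Fin K → X) | d1 ≤ d p},
          seqProb p1 (Finset.univ.filter fun s : Fin t → Fin K → X =>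
            Delta0 d d0 (empDist s) < ENNReal.ofReal α))
        ≤ ((t : ENNReal) + 1) ^ (Fintype.card X ^ K) *
            ENNReal.ofReal ((2:ℝ) ^ (-(t : ℝ) * b)) := by
  have hcard : Fintype.card X ^ K = Fintype.card (Fin K → X) := by simp
  rw [hcard]
  refine ⟨iSup₂_le fun p0 hp0 => seqProb_le_of_le_KLdiv ht hp0.1 _ α fun s hs => ?_,
    fun b _ hb => iSup₂_le fun p1 hp1 => seqProb_le_of_le_KLdiv ht hp1.1 _ b fun s hs => ?_⟩
  · exact (not_lt.1 (mem_filter.1 hs).2).trans (Delta0_le_KLdiv hp0.1 hp0.2)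
  · calc ENNReal.ofReal b ≤ betaStarHigh d d0 d1 (ENNReal.ofReal α) := hb
      _ ≤ Delta1 d d1 (empDist s) :=
          betaStarHigh_le_Delta1 (empDist_mem_simplex ht s) (mem_filter.1 hs).2
      _ ≤ KLdiv (empDist s) p1 := Delta1_le_KLdiv hp1.1 hp1.2

/-- Error-exponent bounds for the Hoeffding test which accepts `H₀` iff `Δ₀` of the
joint empirical type is `< α`.  The worst-case type-I error satisfies
`μ_t ≤ (t+1)^{|X|^K} · 2^{−tα}` and the worst-case type-II error satisfies
`λ_t ≤ (t+1)^{|X|^K} · 2^{−t β^*(α)}` (the latter expressed via every real lower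
bound `b` on `β^*(α)`). -/
theorem stmt18 {X : Type*} [Fintype X] [DecidableEq X] (K t : ℕ) (ht : 0 < t)
    (d : ((Fin K → X) → ℝ) → ℝ) (d0 d1 : ℝ) (α : ℝ) (hα : 0 < α) :
    (⨆ p0 ∈ {p ∈ simplex (Fin K → X) | d p ≤ d0},
        seqProb p0 (Finset.univ.filter fun s : Fin t → Fin K → X =>
          ¬ Delta0 d d0 (empDist s) < ENNReal.ofReal α))
      ≤ ((t : ENNReal) + 1) ^ (Fintype.card X ^ K) *
          ENNReal.ofReal ((2:ℝ) ^ (-(t : ℝ) * α)) ∧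
    ∀ b : ℝ, 0 ≤ b →
      ENNReal.ofReal b ≤ betaStarHigh (Z := Fin K → X) d d0 d1 (ENNReal.ofReal α) →
      (⨆ p1 ∈ {p ∈ simplex (Fin K → X) | d1 ≤ d p},
          seqProb p1 (Finset.univ.filter fun s : Fin t → Fin K → X =>
            Delta0 d d0 (empDist s) < ENNReal.ofReal α))
        ≤ ((t : ENNReal) + 1) ^ (Fintype.card X ^ K) *
            ENNReal.ofReal ((2:ℝ) ^ (-(t : ℝ) * b)) :=
  stmt18_general K t ht d d0 d1 α
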